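/- Let f : ℝ₊ × X → X be a continuous semiflow on a compact metric space and x ∈ X. If C_x is not generic, then x ∉ C_x, and moreover x is proximal to C_x: liminf_{t→∞} d(f(t,x), f(t,C_x)) = 0. -/

import Mathlib

/-!
If `x ∈ C_x`, then `x` itself would witness that `C_x` is generic. For proximality, the key fact
is that `C ⊆ f(s, C)` for every `s ≥ 0`: the orbit spends density-one time near `C`, hence (after
the shift by `s`) also near `f(s, C)`, so by compactness `C ∩ f(s, C)` is again a center of
attraction, and minimality forces it to be all of `C`. Given `s`, pick a time `u` with `f(u, x)` close to some
`c = f(u, c') ∈ C`; uniform continuity of `f(s, ·)` then makes `f(s + u, x)` close to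
`f(s + u, c') ∈ f(s + u, C)`.
-/

open MeasureTheory Filter Metric Set Topology
open scoped Classical

noncomputable section

/-- The set `S ⊆ ℝ` has density `α` in `[0,∞)`. -/
def HasDens (S : Set ℝ) (α : ℝ) : Prop :=
  Filter.Tendsto (fun T : ℝ => (MeasureTheory.volume (S ∩ Set.Icc 0 T)).toReal / T)
    Filter.atTop (nhds α)

/-- `f` is a continuous semiflow on `X` (time in `[0,∞)`). -/
def IsSemiflow {X : Type*} [MetricSpace X] (f : ℝ → X → X) : Prop :=
  ContinuousOn (fun p : ℝ × X => f p.1 p.2) (Set.Ici 0 ×ˢ Set.univ) ∧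
  (∀ x : X, f 0 x = x) ∧
  (∀ s t : ℝ, 0 ≤ s → 0 ≤ t → ∀ x : X, f s (f t x) = f (s + t) x)

/-- `C` is a center of attraction of the motion `f (t, x)`. -/
def IsCtr {X : Type*} [MetricSpace X] (f : ℝ → X → X) (x : X) (C : Set X) : Prop :=
  IsClosed C ∧ ∀ ε > (0 : ℝ), HasDens {t : ℝ | 0 ≤ t ∧ f t x ∈ Metric.thickening ε C} 1

/-- `C` is the minimal center of attraction of the motion `f (t, x)`. -/
def IsMCA {X : Type*} [MetricSpace X] (f : ℝ → X → X) (x : X) (C : Set X) : Prop :=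
  IsCtr f x C ∧ ∀ C' ⊆ C, IsCtr f x C' → C' = C


lemma volume_inter_Icc_ne_top (S : Set ℝ) (T : ℝ) : volume (S ∩ Icc 0 T) ≠ ⊤ :=
  ((measure_mono inter_subset_right).trans_lt measure_Icc_lt_top).ne

section Density

variable {S S' : Set ℝ}

lemma HasDens.nonempty {α : ℝ} (h : HasDens S α) (hα : α ≠ 0) : S.Nonempty := by
  rw [nonempty_iff_ne_empty]
  rintro rfl
  exact hα (tendsto_nhds_unique h (by simp))

lemma hasDens_one_of_tendsto_of_le {lo : ℝ → ℝ} (hlo : Tendsto lo atTop (𝓝 1))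
    (hle : ∀ᶠ T in atTop, lo T ≤ volume.real (S ∩ Icc 0 T) / T) : HasDens S 1 := by
  refine tendsto_of_tendsto_of_tendsto_of_le_of_le' hlo tendsto_const_nhds hle ?_
  filter_upwards [eventually_gt_atTop 0] with T hT
  rw [div_le_one hT]
  calc volume.real (S ∩ Icc 0 T) ≤ volume.real (Icc 0 T) :=
        measureReal_mono inter_subset_right measure_Icc_lt_top.ne
    _ = T := by simp [hT.le]

lemma HasDens.mono_one (h : HasDens S 1) (hSS' : S ⊆ S') : HasDens S' 1 := by
  refine hasDens_one_of_tendsto_of_le h ?_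
  filter_upwards [eventually_ge_atTop 0] with T hT
  exact div_le_div_of_nonneg_right
    (measureReal_mono (inter_subset_inter_left _ hSS') (volume_inter_Icc_ne_top _ _)) hT

lemma HasDens.image_add_one (h : HasDens S 1) {s : ℝ} (hs : 0 ≤ s) :
    HasDens ((s + ·) '' S) 1 := by
  have hlo : Tendsto (fun T => volume.real (S ∩ Icc 0 T) / T - s / T) atTop (𝓝 1) := by
    have := h.sub ((tendsto_const_nhds (x := s)).div_atTop tendsto_id)
    rwa [sub_zero] at this
  refine hasDens_one_of_tendsto_of_le hlo ?_
  filter_upwards [eventually_gt_atTop 0] with T hT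
  rw [← sub_div]
  gcongr
  have hsplit : S ∩ Icc 0 T ⊆ S ∩ Icc 0 (T - s) ∪ Icc (T - s) T := by
    rintro t ⟨htS, ht0, htT⟩
    rcases le_or_gt t (T - s) with hts | hts
    exacts [Or.inl ⟨htS, ht0, hts⟩, Or.inr ⟨hts.le, htT⟩]
  have hshift : (s + ·) '' (S ∩ Icc 0 (T - s)) ⊆ (s + ·) '' S ∩ Icc 0 T := by
    rintro _ ⟨u, ⟨huS, hu0, huT⟩, rfl⟩
    exact ⟨mem_image_of_mem _ huS, by linarith, by linarith⟩
  calc volume.real (S ∩ Icc 0 T) - s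
      ≤ volume.real (S ∩ Icc 0 (T - s)) + volume.real (Icc (T - s) T) - s := by
        gcongr
        exact (measureReal_mono hsplit
          (measure_union_ne_top (volume_inter_Icc_ne_top _ _) measure_Icc_lt_top.ne)).trans
          (measureReal_union_le _ _)
    _ = volume.real ((s + ·) '' (S ∩ Icc 0 (T - s))) := by
        rw [Real.volume_real_Icc_of_le (by linarith)]
        simp only [Measure.real, image_add_left, measure_preimage_add]
        ring
    _ ≤ volume.real ((s + ·) '' S ∩ Icc 0 T) :=
        measureReal_mono hshift (volume_inter_Icc_ne_top _ _)

lemma HasDens.inter_one (h : HasDens S 1) (h' : HasDens S' 1) (hS : MeasurableSet S) :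
    HasDens (S ∩ S') 1 := by
  have hlo : Tendsto (fun T => volume.real (S ∩ Icc 0 T) / T + volume.real (S' ∩ Icc 0 T) / T - 1)
      atTop (𝓝 1) := by
    have := (h.add h').sub_const 1
    rwa [show (1 : ℝ) + 1 - 1 = 1 by norm_num] at this
  refine hasDens_one_of_tendsto_of_le hlo ?_
  filter_upwards [eventually_gt_atTop 0] with T hT
  have hsum := measureReal_union_add_inter (μ := volume) (s := S' ∩ Icc 0 T)
    (hS.inter (measurableSet_Icc (a := 0) (b := T))) (volume_inter_Icc_ne_top _ _)
    (volume_inter_Icc_ne_top _ _)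
  have hunion : volume.real (S' ∩ Icc 0 T ∪ S ∩ Icc 0 T) ≤ T := by
    calc _ ≤ volume.real (Icc (0 : ℝ) T) :=
          measureReal_mono (union_subset inter_subset_right inter_subset_right)
            measure_Icc_lt_top.ne
      _ = T := by simp [hT.le]
  have hinter : S' ∩ Icc 0 T ∩ (S ∩ Icc 0 T) = S ∩ S' ∩ Icc 0 T := by
    ext; simp only [mem_inter_iff]; tauto
  rw [hinter] at hsum
  calc _ = (volume.real (S ∩ Icc 0 T) + volume.real (S' ∩ Icc 0 T) - T) / T := by field_simp
    _ ≤ volume.real (S ∩ S' ∩ Icc 0 T) / T := by gcongr; linarith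

end Density

lemma exists_thickening_inter_subset {X : Type*} [PseudoMetricSpace X] {C D : Set X}
    (hC : IsCompact C) (hD : IsClosed D) {ε : ℝ} (hε : 0 < ε) :
    ∃ δ > 0, thickening δ C ∩ thickening δ D ⊆ thickening ε (C ∩ D) := by
  set U := thickening (ε / 2) (C ∩ D)
  have hdisj : Disjoint (C \ U) D := disjoint_left.2 fun z hz hzD =>
    hz.2 (self_subset_thickening (half_pos hε) _ ⟨hz.1, hzD⟩)
  obtain ⟨δ, hδ, hsep⟩ := hdisj.exists_thickenings (hC.diff isOpen_thickening) hD
  refine ⟨min δ (ε / 2), by positivity, ?_⟩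
  rintro z ⟨hzC, hzD⟩
  obtain ⟨c, hc, hzc⟩ := mem_thickening_iff.1 hzC
  have hcU : c ∈ U := by
    by_contra hcU
    exact disjoint_left.1 hsep
      (mem_thickening_iff.2 ⟨c, ⟨hc, hcU⟩, hzc.trans_le (min_le_left _ _)⟩)
      (thickening_mono (min_le_left _ _) _ hzD)
  have hzU : z ∈ thickening (ε / 2) U :=
    mem_thickening_iff.2 ⟨c, hcU, hzc.trans_le (min_le_right _ _)⟩
  simpa using thickening_thickening_subset (ε / 2) (ε / 2) (C ∩ D) hzU

lemma liminf_eq_zero_of_frequently_lt {ι : Type*} {l : Filter ι} {g : ι → ℝ}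
    (hg : ∀ i, 0 ≤ g i) (h : ∀ ε > 0, ∃ᶠ i in l, g i < ε) : liminf g l = 0 := by
  refine le_antisymm (le_of_forall_pos_le_add fun ε hε => ?_)
    (le_liminf_of_le (.of_frequently_le ((h 1 one_pos).mono fun _ => le_of_lt)) (.of_forall hg))
  simpa using liminf_le_of_frequently_le ((h ε hε).mono fun _ => le_of_lt)
    (isBoundedUnder_of ⟨0, hg⟩)

section Semiflow

variable {X : Type*} [MetricSpace X] {f : ℝ → X → X} {x : X} {C : Set X} {s : ℝ}

namespace IsSemiflow

lemma continuous_apply (hf : IsSemiflow f) (hs : 0 ≤ s) : Continuous (f s) :=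
  hf.1.comp_continuous (continuous_const.prodMk continuous_id) fun y => ⟨hs, mem_univ y⟩

lemma uniformContinuous_apply [CompactSpace X] (hf : IsSemiflow f) (hs : 0 ≤ s) :
    UniformContinuous (f s) :=
  CompactSpace.uniformContinuous_of_continuous (hf.continuous_apply hs)

lemma measurableSet_setOf_mem (hf : IsSemiflow f) (x : X) {U : Set X} (hU : IsOpen U) :
    MeasurableSet {t : ℝ | 0 ≤ t ∧ f t x ∈ U} := by
  have hcont : ContinuousOn (fun t => f t x) (Ici 0) :=
    hf.1.comp (continuous_id.prodMk continuous_const).continuousOn fun t ht => ⟨ht, mem_univ x⟩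
  obtain ⟨V, hV, hVeq⟩ := _root_.continuousOn_iff'.1 hcont U hU
  have hset : {t : ℝ | 0 ≤ t ∧ f t x ∈ U} = V ∩ Ici 0 := by
    rw [← hVeq]; ext t; exact and_comm
  rw [hset]
  exact hV.measurableSet.inter measurableSet_Ici

end IsSemiflow

lemma IsCtr.inter_image [CompactSpace X] (hC : IsCtr f x C) (hf : IsSemiflow f) (hs : 0 ≤ s) :
    IsCtr f x (C ∩ f s '' C) := by
  have hCc : IsCompact C := hC.1.isCompact
  have hD : IsClosed (f s '' C) := (hCc.image (hf.continuous_apply hs)).isClosed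
  refine ⟨hC.1.inter hD, fun ε hε => ?_⟩
  obtain ⟨δ, hδ, hδε⟩ := exists_thickening_inter_subset hCc hD hε
  obtain ⟨δ', hδ', hδ'δ⟩ := Metric.uniformContinuous_iff.1 (hf.uniformContinuous_apply hs) δ hδ
  have hshift : (s + ·) '' {t | 0 ≤ t ∧ f t x ∈ thickening δ' C}
      ⊆ {t | 0 ≤ t ∧ f t x ∈ thickening δ (f s '' C)} := by
    rintro _ ⟨u, ⟨hu, hux⟩, rfl⟩
    obtain ⟨c, hc, hdist⟩ := mem_thickening_iff.1 hux
    refine ⟨add_nonneg hs hu, ?_⟩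
    rw [← hf.2.2 s u hs hu x]
    exact mem_thickening_iff.2 ⟨f s c, mem_image_of_mem _ hc, hδ'δ hdist⟩
  have hnear := (hC.2 δ hδ).inter_one (((hC.2 δ' hδ').image_add_one hs).mono_one hshift)
    (hf.measurableSet_setOf_mem x isOpen_thickening)
  refine hnear.mono_one ?_
  rintro t ⟨⟨ht, htC⟩, -, htD⟩
  exact ⟨ht, hδε ⟨htC, htD⟩⟩

lemma IsMCA.subset_image [CompactSpace X] (hC : IsMCA f x C) (hf : IsSemiflow f) (hs : 0 ≤ s) :
    C ⊆ f s '' C :=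
  inter_eq_left.1 (hC.2 _ inter_subset_left (hC.1.inter_image hf hs))

lemma IsMCA.frequently_infDist_image_lt [CompactSpace X] (hC : IsMCA f x C) (hf : IsSemiflow f)
    {ε : ℝ} (hε : 0 < ε) : ∃ᶠ t in atTop, infDist (f t x) (f t '' C) < ε := by
  refine frequently_atTop.2 fun T₀ => ?_
  set s := max T₀ 0
  have hs : 0 ≤ s := le_max_right _ _
  obtain ⟨δ, hδ, hδε⟩ := Metric.uniformContinuous_iff.1 (hf.uniformContinuous_apply hs) ε hε
  obtain ⟨u, hu, hux⟩ := (hC.1.2 δ hδ).nonempty one_ne_zero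
  obtain ⟨c, hc, hdist⟩ := mem_thickening_iff.1 hux
  obtain ⟨c', hc', rfl⟩ := hC.subset_image hf hu hc
  refine ⟨s + u, le_add_of_le_of_nonneg (le_max_left _ _) hu, ?_⟩
  calc infDist (f (s + u) x) (f (s + u) '' C) ≤ dist (f (s + u) x) (f (s + u) c') :=
        infDist_le_dist_of_mem (mem_image_of_mem _ hc')
    _ < ε := by
        rw [← hf.2.2 s u hs hu, ← hf.2.2 s u hs hu]
        exact hδε hdist

end Semiflow

theorem not_mem_and_proximal_of_not_generic {X : Type*} [MetricSpace X] [CompactSpace X]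
    (f : ℝ → X → X) (hf : IsSemiflow f) (x : X) (C : Set X) (hC : IsMCA f x C)
    (hng : ¬ ∃ y ∈ C, IsMCA f y C) :
    x ∉ C ∧
    Filter.liminf
      (fun t : ℝ => Metric.infDist (f t x) ((fun a => f t a) '' C)) Filter.atTop = 0 :=
  ⟨fun hx => hng ⟨x, hx, hC⟩,
    liminf_eq_zero_of_frequently_lt (fun _ => infDist_nonneg)
      fun _ hε => hC.frequently_infDist_image_lt hf hε⟩
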